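/- arXiv:1603.08744 — 3 statements merged into one kernel-verified Lean document; each statement's English description precedes it below -/
import Mathlib

section
/- With the operator A_m as in the context, assume p_i > 0 for all 1 ≤ i ≤ s+1 and fix a multi-index q ∈ ℕ^s. Then there exists a constant K ≥ 1, depending only on q and on (p₁,…,p_{s+1}) but not on m, such that for every m = (m₁,…,m_{s+1}) ∈ ℕ^{s+1} and every r ∈ ℕ^s with r ≤ q one has |A_m[q,r]| ≤ K · (∏_{i=1}^{s} m̃_i^{q_i − r_i}) · m̃_{s+1}^{|q| − |r|}, where m̃_j := max(1, m_j); moreover, if k := m₁ + ⋯ + m_{s+1} ≥ 1, then also |A_m[q,r]| ≤ K · k^{|q|}. -/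
/-!
Weight the coefficients of a polynomial supported in the box `[0, q]` by `t^u = ∏ tᵢ^uᵢ`, where
`tᵢ ≥ max mᵢ m_{s+1}`. For the resulting weighted `ℓ¹` norm, `∂ᵢ` has norm at most `qᵢ / tᵢ` on
the box, and there `∂ᵢ` and `∑ᵢ ∂ᵢ` are nilpotent of index `qᵢ + 1` and `|q| + 1`. Expanding a
factor `(1 + c ∂)^n` binomially, the surviving terms satisfy `C(n,k) (|c| qᵢ / tᵢ)^k ≤ (|c| qᵢ)^k`
because `n ≤ tᵢ`, so `A_m` is bounded on the box by a constant `K` independent of `m`. Reading off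
the coefficient of `X^r` gives `|A_m[q,r]| ≤ K t^(q - r)`; the two bounds are the choices
`tᵢ = m̃ᵢ m̃_{s+1}` and `tᵢ = k`.
-/

/-- The formal partial derivative `∂_i` as a linear endomorphism of `ℝ[X₁, …, X_s]`. -/
noncomputable def pd (s : ℕ) (i : Fin s) : Module.End ℝ (MvPolynomial (Fin s) ℝ) :=
  (MvPolynomial.pderiv (R := ℝ) i).toLinearMap

/-- The operator `A_m = (∏_{i=1}^s (id + p_i⁻¹ ∂_i)^{m_i}) ∘ (id − p_{s+1}⁻¹ ∑_{i=1}^s ∂_i)^{m_{s+1}}`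
on `ℝ[X₁, …, X_s]`, realizing the normalized matrix cocycle `A(ω,k)`. -/
noncomputable def Aop (s : ℕ) (p : Fin (s + 1) → ℝ) (m : Fin (s + 1) → ℕ) :
    Module.End ℝ (MvPolynomial (Fin s) ℝ) :=
  (List.ofFn fun i : Fin s => (1 + (p i.castSucc)⁻¹ • pd s i) ^ m i.castSucc).prod *
    (1 - (p (Fin.last s))⁻¹ • ∑ i : Fin s, pd s i) ^ m (Fin.last s)

/-- `A_m[q,r]`: the coefficient of the monomial `X^r` in `A_m(X^q)`. -/
noncomputable def Acoeff (s : ℕ) (p : Fin (s + 1) → ℝ) (m : Fin (s + 1) → ℕ)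
    (q r : Fin s → ℕ) : ℝ :=
  MvPolynomial.coeff (Finsupp.equivFunOnFinite.symm r)
    (Aop s p m (MvPolynomial.monomial (Finsupp.equivFunOnFinite.symm q) 1))

open MvPolynomial Finset

section WeightedNorm

variable {σ : Type*}

def monomialWeight (t : σ → ℝ) (u : σ →₀ ℕ) : ℝ := u.prod fun i n => t i ^ n

theorem monomialWeight_add_single (t : σ → ℝ) (u : σ →₀ ℕ) (i : σ) :
    monomialWeight t (u + Finsupp.single i 1) = monomialWeight t u * t i := by
  rw [monomialWeight, Finsupp.prod_add_index' (fun _ => pow_zero _) fun _ => pow_add _,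
    Finsupp.prod_single_index (h := fun j n => t j ^ n) (pow_zero _), pow_one, monomialWeight]

theorem monomialWeight_pos {t : σ → ℝ} (ht : ∀ i, 0 < t i) (u : σ →₀ ℕ) :
    0 < monomialWeight t u :=
  prod_pos fun i _ => pow_pos (ht i) _

theorem sum_support_abs_coeff_mul_eq {f : MvPolynomial σ ℝ} {A : Finset (σ →₀ ℕ)}
    (hA : f.support ⊆ A) (w : (σ →₀ ℕ) → ℝ) :
    ∑ u ∈ f.support, |coeff u f| * w u = ∑ u ∈ A, |coeff u f| * w u :=
  sum_subset hA fun u _ hu => by rw [notMem_support_iff.mp hu, abs_zero, zero_mul]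

noncomputable def weightedL1 (t : σ → ℝ) (ht : ∀ i, 0 < t i) :
    Seminorm ℝ (MvPolynomial σ ℝ) :=
  Seminorm.ofSMulLE (fun f => ∑ u ∈ f.support, |coeff u f| * monomialWeight t u) (by simp)
    (fun f g => by
      classical
      rw [sum_support_abs_coeff_mul_eq (support_add (p := f) (q := g)),
        sum_support_abs_coeff_mul_eq subset_union_left,
        sum_support_abs_coeff_mul_eq subset_union_right, ← sum_add_distrib]
      refine sum_le_sum fun u _ => ?_
      rw [coeff_add, ← add_mul]
      exact mul_le_mul_of_nonneg_right (abs_add_le _ _) (monomialWeight_pos ht u).le)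
    (fun c f => by
      rw [sum_support_abs_coeff_mul_eq support_smul, Real.norm_eq_abs, mul_sum]
      refine sum_le_sum fun u _ => ?_
      rw [coeff_smul, smul_eq_mul, abs_mul, mul_assoc])

variable {t : σ → ℝ} {ht : ∀ i, 0 < t i}

theorem weightedL1_eq_sum_of_support_subset {f : MvPolynomial σ ℝ} {A : Finset (σ →₀ ℕ)}
    (hA : f.support ⊆ A) : weightedL1 t ht f = ∑ u ∈ A, |coeff u f| * monomialWeight t u :=
  sum_support_abs_coeff_mul_eq hA _

theorem abs_coeff_mul_monomialWeight_le (f : MvPolynomial σ ℝ) (u : σ →₀ ℕ) :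
    |coeff u f| * monomialWeight t u ≤ weightedL1 t ht f := by
  classical
  rw [weightedL1_eq_sum_of_support_subset (subset_insert u f.support)]
  exact single_le_sum (f := fun v => |coeff v f| * monomialWeight t v)
    (fun v _ => mul_nonneg (abs_nonneg _) (monomialWeight_pos ht v).le) (mem_insert_self u _)

theorem weightedL1_monomial_one (u : σ →₀ ℕ) :
    weightedL1 t ht (monomial u (1 : ℝ)) = monomialWeight t u := by
  classical
  rw [weightedL1_eq_sum_of_support_subset support_monomial_subset, sum_singleton,
    coeff_monomial, if_pos rfl, abs_one, one_mul]

end WeightedNorm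

section Derivative

variable {σ R : Type*} [CommSemiring R]

theorem add_single_mem_support_of_mem_support_pderiv {i : σ} {f : MvPolynomial σ R}
    {u : σ →₀ ℕ} (hu : u ∈ (pderiv i f).support) : u + Finsupp.single i 1 ∈ f.support := by
  rw [mem_support_iff, coeff_pderiv] at hu
  exact mem_support_iff.mpr (left_ne_zero_of_mul hu)

theorem pderiv_mem_restrictSupport_Iic {Q : σ →₀ ℕ} {f : MvPolynomial σ R}
    (hf : f ∈ restrictSupport R (Set.Iic Q)) (i : σ) :
    pderiv i f ∈ restrictSupport R (Set.Iic Q) := fun _ hu =>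
  le_self_add.trans (Set.mem_Iic.mp (hf (add_single_mem_support_of_mem_support_pderiv hu)))

theorem pow_succ_apply_eq_zero_of_lowers (φ : (σ →₀ ℕ) → ℕ) {T : Module.End R (MvPolynomial σ R)}
    (hT : ∀ f, ∀ u ∈ (T f).support, ∃ v ∈ f.support, φ u < φ v) {d : ℕ}
    {f : MvPolynomial σ R} (hf : ∀ v ∈ f.support, φ v ≤ d) : (T ^ (d + 1)) f = 0 := by
  have hpow : ∀ k, ∀ u ∈ ((T ^ k) f).support, ∃ v ∈ f.support, φ u + k ≤ φ v := by
    intro k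
    induction k with
    | zero => exact fun u hu => ⟨u, by simpa using hu, le_rfl⟩
    | succ k ih =>
      intro u hu
      rw [pow_succ', Module.End.mul_apply] at hu
      obtain ⟨v, hv, huv⟩ := hT _ u hu
      obtain ⟨w, hw, hvw⟩ := ih v hv
      exact ⟨w, hw, by omega⟩
  refine support_eq_empty.mp (eq_empty_of_forall_notMem fun u hu => ?_)
  obtain ⟨v, hv, huv⟩ := hpow (d + 1) u hu
  have := hf v hv
  omega

end Derivative

section OperatorBound

variable {M : Type*} [AddCommGroup M] [Module ℝ M]

def BoundedOn (N : Seminorm ℝ M) (V : Submodule ℝ M) (C : ℝ) (T : Module.End ℝ M) : Prop :=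
  ∀ x ∈ V, T x ∈ V ∧ N (T x) ≤ C * N x

variable {N : Seminorm ℝ M} {V : Submodule ℝ M} {C D : ℝ} {S T : Module.End ℝ M}

namespace BoundedOn

theorem mono (hT : BoundedOn N V C T) (hCD : C ≤ D) : BoundedOn N V D T := fun x hx =>
  ⟨(hT x hx).1, (hT x hx).2.trans (mul_le_mul_of_nonneg_right hCD (apply_nonneg N x))⟩

theorem of_apply_eq_zero (hT : ∀ x ∈ V, T x = 0) : BoundedOn N V 0 T := fun x hx => by
  simp [hT x hx]

theorem one : BoundedOn N V 1 1 := fun x hx => by simpa using hx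

theorem mul (hS : BoundedOn N V C S) (hT : BoundedOn N V D T) (hC : 0 ≤ C) :
    BoundedOn N V (C * D) (S * T) := fun x hx =>
  ⟨(hS _ (hT x hx).1).1, calc
    N ((S * T) x) ≤ C * N (T x) := (hS _ (hT x hx).1).2
    _ ≤ C * (D * N x) := mul_le_mul_of_nonneg_left (hT x hx).2 hC
    _ = C * D * N x := (mul_assoc _ _ _).symm⟩

theorem pow (hT : BoundedOn N V C T) (hC : 0 ≤ C) (k : ℕ) : BoundedOn N V (C ^ k) (T ^ k) := by
  induction k with
  | zero => simpa using one
  | succ k ih => simpa [pow_succ] using ih.mul hT (pow_nonneg hC k)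

theorem add (hS : BoundedOn N V C S) (hT : BoundedOn N V D T) :
    BoundedOn N V (C + D) (S + T) := fun x hx =>
  ⟨V.add_mem (hS x hx).1 (hT x hx).1, calc
    N ((S + T) x) ≤ N (S x) + N (T x) := map_add_le_add N _ _
    _ ≤ C * N x + D * N x := add_le_add (hS x hx).2 (hT x hx).2
    _ = (C + D) * N x := (add_mul _ _ _).symm⟩

theorem sum {ι : Type*} {s : Finset ι} {C : ι → ℝ} {T : ι → Module.End ℝ M}
    (hT : ∀ i ∈ s, BoundedOn N V (C i) (T i)) :
    BoundedOn N V (∑ i ∈ s, C i) (∑ i ∈ s, T i) := by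
  classical
  induction s using Finset.induction_on with
  | empty => simpa using of_apply_eq_zero (N := N) (V := V) (T := 0) fun _ _ => rfl
  | insert j s hj ih =>
    rw [sum_insert hj, sum_insert hj]
    exact (hT j (mem_insert_self j s)).add (ih fun i hi => hT i (mem_insert_of_mem hi))

theorem smul (hT : BoundedOn N V C T) (c : ℝ) : BoundedOn N V (|c| * C) (c • T) := fun x hx =>
  ⟨V.smul_mem c (hT x hx).1, by
    rw [LinearMap.smul_apply, map_smul_eq_mul, Real.norm_eq_abs, mul_assoc]
    exact mul_le_mul_of_nonneg_left (hT x hx).2 (abs_nonneg c)⟩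

theorem list_prod_ofFn {n : ℕ} {C : Fin n → ℝ} {T : Fin n → Module.End ℝ M}
    (hT : ∀ i, BoundedOn N V (C i) (T i)) (hC : ∀ i, 0 ≤ C i) :
    BoundedOn N V (∏ i, C i) (List.ofFn T).prod := by
  induction n with
  | zero => simpa using one
  | succ n ih =>
    rw [List.ofFn_succ, List.prod_cons, Fin.prod_univ_succ]
    exact (hT 0).mul (ih (fun i => hT i.succ) fun i => hC i.succ) (hC 0)

theorem one_add_smul_pow {B E : ℝ} {d : ℕ} (hT : BoundedOn N V B T) (hB : 0 ≤ B)
    (hnil : ∀ x ∈ V, (T ^ (d + 1)) x = 0) (c : ℝ) (n : ℕ) (hE : n * B ≤ E) :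
    BoundedOn N V (∑ k ∈ range (d + 1), (|c| * E) ^ k) ((1 + c • T) ^ n) := by
  have hexp : (1 + c • T) ^ n = ∑ k ∈ range (n + 1), (n.choose k * c ^ k) • T ^ k := by
    rw [add_comm, (Commute.one_right _).add_pow]
    refine sum_congr rfl fun k _ => ?_
    rw [one_pow, mul_one, smul_pow, mul_smul, ← Nat.cast_comm, ← nsmul_eq_mul,
      Nat.cast_smul_eq_nsmul]
  have hterm : ∀ k ∈ range (n + 1), BoundedOn N V
      (if k ≤ d then n.choose k * (|c| * B) ^ k else 0) ((n.choose k * c ^ k) • T ^ k) := by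
    intro k _
    split_ifs with hk
    · refine ((hT.pow hB k).smul _).mono (le_of_eq ?_)
      rw [abs_mul, abs_pow, Nat.abs_cast, mul_pow, mul_assoc]
    · refine of_apply_eq_zero fun x hx => ?_
      have hsplit : T ^ k = T ^ (k - (d + 1)) * T ^ (d + 1) := by
        rw [← pow_add, Nat.sub_add_cancel (not_le.mp hk)]
      rw [LinearMap.smul_apply, hsplit, Module.End.mul_apply, hnil x hx, map_zero, smul_zero]
  rw [hexp]
  refine (sum hterm).mono ?_
  rw [← sum_filter]
  calc ∑ k ∈ (range (n + 1)).filter (· ≤ d), n.choose k * (|c| * B) ^ k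
      ≤ ∑ k ∈ range (d + 1), n.choose k * (|c| * B) ^ k :=
        sum_le_sum_of_subset_of_nonneg (fun k hk => by simp at hk ⊢; omega)
          fun k _ _ => by positivity
    _ ≤ ∑ k ∈ range (d + 1), (|c| * E) ^ k := sum_le_sum fun k _ => by
        calc (n.choose k : ℝ) * (|c| * B) ^ k ≤ n ^ k * (|c| * B) ^ k := by
              gcongr; exact_mod_cast n.choose_le_pow k
          _ = (|c| * (n * B)) ^ k := by ring
          _ ≤ (|c| * E) ^ k := by gcongr

end BoundedOn

end OperatorBound

section PartialDerivative

variable {s : ℕ} {Q : Fin s →₀ ℕ}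

theorem pd_pow_apply_eq_zero (i : Fin s) {f : MvPolynomial (Fin s) ℝ}
    (hf : f ∈ restrictSupport ℝ (Set.Iic Q)) : (pd s i ^ (Q i + 1)) f = 0 :=
  pow_succ_apply_eq_zero_of_lowers (· i)
    (fun _ _ hu => ⟨_, add_single_mem_support_of_mem_support_pderiv hu, by simp⟩)
    fun _ hv => hf hv i

theorem sum_pd_pow_apply_eq_zero {f : MvPolynomial (Fin s) ℝ}
    (hf : f ∈ restrictSupport ℝ (Set.Iic Q)) : ((∑ i, pd s i) ^ (Q.degree + 1)) f = 0 := by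
  refine pow_succ_apply_eq_zero_of_lowers Finsupp.degree (fun g u hu => ?_)
    fun _ hv => Finsupp.degree_mono (hf hv)
  rw [LinearMap.sum_apply] at hu
  obtain ⟨i, -, hu⟩ := mem_biUnion.mp (support_sum hu)
  exact ⟨_, add_single_mem_support_of_mem_support_pderiv hu, by simp⟩

variable {t : Fin s → ℝ} {ht : ∀ i, 0 < t i}

theorem boundedOn_pd (i : Fin s) :
    BoundedOn (weightedL1 t ht) (restrictSupport ℝ (Set.Iic Q)) (Q i / t i) (pd s i) := by
  intro f hf
  refine ⟨pderiv_mem_restrictSupport_Iic hf i, ?_⟩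
  set S := (pderiv i f).support
  have hterm : ∀ u ∈ S, |coeff u (pderiv i f)| * monomialWeight t u ≤
      Q i / t i * (|coeff (u + Finsupp.single i 1) f| *
        monomialWeight t (u + Finsupp.single i 1)) := by
    intro u hu
    have hle : (u i + 1 : ℝ) ≤ Q i := by
      have := hf (add_single_mem_support_of_mem_support_pderiv hu) i
      simp only [Finsupp.coe_add, Pi.add_apply, Finsupp.single_eq_same] at this
      exact_mod_cast this
    have hw := (monomialWeight_pos ht u).le
    have hti := (ht i).le
    rw [coeff_pderiv, abs_mul, monomialWeight_add_single,
      abs_of_nonneg (by positivity : (0 : ℝ) ≤ u i + 1), div_mul_eq_mul_div, le_div_iff₀ (ht i)]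
    calc |coeff (u + Finsupp.single i 1) f| * (u i + 1) * monomialWeight t u * t i
        ≤ |coeff (u + Finsupp.single i 1) f| * Q i * monomialWeight t u * t i := by gcongr
      _ = Q i * (|coeff (u + Finsupp.single i 1) f| * (monomialWeight t u * t i)) := by ring
  calc weightedL1 t ht (pd s i f) = ∑ u ∈ S, |coeff u (pderiv i f)| * monomialWeight t u := rfl
    _ ≤ ∑ u ∈ S, Q i / t i * (|coeff (u + Finsupp.single i 1) f| *
          monomialWeight t (u + Finsupp.single i 1)) := sum_le_sum hterm
    _ = Q i / t i * ∑ v ∈ S.map (addRightEmbedding (Finsupp.single i 1)),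
          |coeff v f| * monomialWeight t v := by rw [mul_sum, sum_map]; rfl
    _ ≤ Q i / t i * weightedL1 t ht f := by
        refine mul_le_mul_of_nonneg_left (sum_le_sum_of_subset_of_nonneg ?_ ?_)
          (div_nonneg (Nat.cast_nonneg _) (ht i).le)
        · intro v hv
          obtain ⟨u, hu, rfl⟩ := mem_map.mp hv
          exact add_single_mem_support_of_mem_support_pderiv hu
        · exact fun v _ _ => mul_nonneg (abs_nonneg _) (monomialWeight_pos ht v).le

end PartialDerivative

noncomputable def growthConst {s : ℕ} (p : Fin (s + 1) → ℝ) (q : Fin s → ℕ) : ℝ :=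
  (∏ i, ∑ k ∈ range (q i + 1), (|(p i.castSucc)⁻¹| * q i) ^ k) *
    ∑ k ∈ range (∑ i, q i + 1), (|(p (Fin.last s))⁻¹| * ∑ i, q i) ^ k

theorem one_le_sum_range_pow {x : ℝ} (hx : 0 ≤ x) (d : ℕ) : 1 ≤ ∑ k ∈ range (d + 1), x ^ k := by
  rw [sum_range_succ']
  simpa using sum_nonneg fun k _ => pow_nonneg hx (k + 1)

theorem one_le_growthConst {s : ℕ} (p : Fin (s + 1) → ℝ) (q : Fin s → ℕ) :
    1 ≤ growthConst p q :=
  one_le_mul_of_one_le_of_one_le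
    (one_le_prod fun i _ => one_le_sum_range_pow (by positivity) _)
    (one_le_sum_range_pow (by positivity) _)

theorem mul_div_le_of_le {m t x : ℝ} (ht : 0 < t) (hx : 0 ≤ x) (hm : m ≤ t) : m * (x / t) ≤ x := by
  rw [mul_div_left_comm]
  exact mul_le_of_le_one_right hx ((div_le_one ht).mpr hm)

theorem boundedOn_Aop {s : ℕ} (p : Fin (s + 1) → ℝ) (m : Fin (s + 1) → ℕ) (Q : Fin s →₀ ℕ)
    {t : Fin s → ℝ} (ht : ∀ i, 0 < t i) (hm : ∀ i, (m i.castSucc : ℝ) ≤ t i)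
    (hlast : ∀ i, (m (Fin.last s) : ℝ) ≤ t i) :
    BoundedOn (weightedL1 t ht) (restrictSupport ℝ (Set.Iic Q)) (growthConst p Q) (Aop s p m) := by
  have hQt : ∀ i, 0 ≤ (Q i : ℝ) / t i := fun i => div_nonneg (Nat.cast_nonneg _) (ht i).le
  have hfactor : ∀ i : Fin s, BoundedOn (weightedL1 t ht) (restrictSupport ℝ (Set.Iic Q))
      (∑ k ∈ range (Q i + 1), (|(p i.castSucc)⁻¹| * Q i) ^ k)
      ((1 + (p i.castSucc)⁻¹ • pd s i) ^ m i.castSucc) := fun i =>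
    (boundedOn_pd i).one_add_smul_pow (hQt i) (fun _ hf => pd_pow_apply_eq_zero i hf) _ _
      (mul_div_le_of_le (ht i) (Nat.cast_nonneg _) (hm i))
  have hlastFactor : BoundedOn (weightedL1 t ht) (restrictSupport ℝ (Set.Iic Q))
      (∑ k ∈ range (∑ i, Q i + 1), (|(p (Fin.last s))⁻¹| * ∑ i, Q i) ^ k)
      ((1 - (p (Fin.last s))⁻¹ • ∑ i, pd s i) ^ m (Fin.last s)) := by
    have hsub : 1 - (p (Fin.last s))⁻¹ • ∑ i, pd s i = 1 + (-(p (Fin.last s))⁻¹) • ∑ i, pd s i := by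
      module
    rw [hsub, ← abs_neg, ← Finsupp.degree_eq_sum]
    refine (BoundedOn.sum fun i _ => boundedOn_pd i).one_add_smul_pow (sum_nonneg fun i _ => hQt i)
      (fun _ hf => sum_pd_pow_apply_eq_zero hf) _ _ ?_
    rw [mul_sum, Finsupp.degree_eq_sum, Nat.cast_sum]
    exact sum_le_sum fun i _ => mul_div_le_of_le (ht i) (Nat.cast_nonneg _) (hlast i)
  exact (BoundedOn.list_prod_ofFn hfactor fun i => sum_nonneg fun k _ => by positivity).mul
    hlastFactor (prod_nonneg fun i _ => sum_nonneg fun k _ => by positivity)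

theorem abs_Acoeff_le {s : ℕ} (p : Fin (s + 1) → ℝ) (m : Fin (s + 1) → ℕ) {q r : Fin s → ℕ}
    (hr : ∀ i, r i ≤ q i) {t : Fin s → ℝ} (ht : ∀ i, 0 < t i)
    (hm : ∀ i, (m i.castSucc : ℝ) ≤ t i) (hlast : ∀ i, (m (Fin.last s) : ℝ) ≤ t i) :
    |Acoeff s p m q r| ≤ growthConst p q * ∏ i, t i ^ (q i - r i) := by
  set Q := Finsupp.equivFunOnFinite.symm q
  set R := Finsupp.equivFunOnFinite.symm r
  have hweight : ∀ u : Fin s → ℕ, monomialWeight t (Finsupp.equivFunOnFinite.symm u) =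
      ∏ i, t i ^ u i := fun u => by
    rw [monomialWeight, Finsupp.prod_fintype _ _ fun i => pow_zero _]; simp
  have hpos : 0 < ∏ i, t i ^ r i := prod_pos fun i _ => pow_pos (ht i) _
  have hbound : |Acoeff s p m q r| * ∏ i, t i ^ r i ≤ growthConst p q * ∏ i, t i ^ q i := by
    calc |Acoeff s p m q r| * ∏ i, t i ^ r i
        = |coeff R (Aop s p m (monomial Q 1))| * monomialWeight t R := by rw [hweight]; rfl
      _ ≤ weightedL1 t ht (Aop s p m (monomial Q 1)) := abs_coeff_mul_monomialWeight_le _ _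
      _ ≤ growthConst p Q * weightedL1 t ht (monomial Q 1) :=
          (boundedOn_Aop p m Q ht hm hlast _ (by simp)).2
      _ = growthConst p q * ∏ i, t i ^ q i := by
          rw [weightedL1_monomial_one, hweight]; simp [Q]
  rw [← le_div_iff₀ hpos, mul_div_assoc, ← prod_div_distrib] at hbound
  refine hbound.trans_eq (congrArg _ (prod_congr rfl fun i _ => ?_))
  rw [pow_sub₀ _ (ht i).ne' (hr i), div_eq_mul_inv]

theorem Acoeff_upper_bound_general
    (s : ℕ) (p : Fin (s + 1) → ℝ) (q : Fin s → ℕ) :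
    ∃ K : ℝ, 1 ≤ K ∧ ∀ m : Fin (s + 1) → ℕ, ∀ r : Fin s → ℕ, (∀ i, r i ≤ q i) →
      (|Acoeff s p m q r| ≤
        K * (∏ i : Fin s, ((max 1 (m i.castSucc) : ℕ) : ℝ) ^ (q i - r i)) *
          ((max 1 (m (Fin.last s)) : ℕ) : ℝ) ^ (∑ i, q i - ∑ i, r i)) ∧
      (1 ≤ ∑ j, m j →
        |Acoeff s p m q r| ≤ K * ((∑ j, m j : ℕ) : ℝ) ^ (∑ i, q i)) := by
  refine ⟨growthConst p q, one_le_growthConst p q, fun m r hr => ⟨?_, fun hk => ?_⟩⟩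
  · have hmax : ∀ j, 1 ≤ max 1 (m j) := fun j => le_max_left _ _
    calc |Acoeff s p m q r|
        ≤ growthConst p q * ∏ i, (((max 1 (m i.castSucc) * max 1 (m (Fin.last s)) : ℕ) : ℝ))
            ^ (q i - r i) := by
          refine abs_Acoeff_le p m hr (fun i => by positivity) (fun i => ?_) fun i => ?_
          · exact_mod_cast le_mul_of_le_of_one_le (le_max_right _ _) (hmax _)
          · exact_mod_cast le_mul_of_one_le_of_le (hmax _) (le_max_right _ _)
      _ = _ := by
          rw [mul_assoc, ← sum_tsub_distrib _ fun i _ => hr i]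
          simp only [Nat.cast_mul, mul_pow, prod_mul_distrib, prod_pow_eq_pow_sum]
  · have hk' : (1 : ℝ) ≤ ((∑ j, m j : ℕ) : ℝ) := by exact_mod_cast hk
    have hmk : ∀ j, (m j : ℝ) ≤ ((∑ j, m j : ℕ) : ℝ) := fun j => by
      exact_mod_cast single_le_sum (fun j _ => Nat.zero_le (m j)) (mem_univ j)
    calc |Acoeff s p m q r|
        ≤ growthConst p q * ∏ i, ((∑ j, m j : ℕ) : ℝ) ^ (q i - r i) :=
          abs_Acoeff_le p m hr (fun _ => by linarith) (fun _ => hmk _) fun _ => hmk _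
      _ = growthConst p q * ((∑ j, m j : ℕ) : ℝ) ^ (∑ i, (q i - r i)) := by
          rw [prod_pow_eq_pow_sum]
      _ ≤ growthConst p q * ((∑ j, m j : ℕ) : ℝ) ^ (∑ i, q i) := by
          gcongr
          · linarith [one_le_growthConst p q]
          · exact Nat.sub_le _ _

/-- The polynomial growth upper bound of Lemma `matrix-growth`: there is a constant
`K ≥ 1`, depending only on `q` and the `p_i` but not on `m`, with
`|A_m[q,r]| ≤ K (∏_i m̃_i^(q_i−r_i)) m̃_{s+1}^(|q|−|r|)` where `m̃_j = max 1 m_j`; moreover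
if `k = m₁ + ⋯ + m_{s+1} ≥ 1` then also `|A_m[q,r]| ≤ K k^|q|`. -/
theorem Acoeff_upper_bound
    (s : ℕ) (hs : 1 ≤ s) (p : Fin (s + 1) → ℝ) (hp : ∀ i, 0 < p i) (q : Fin s → ℕ) :
    ∃ K : ℝ, 1 ≤ K ∧ ∀ m : Fin (s + 1) → ℕ, ∀ r : Fin s → ℕ, (∀ i, r i ≤ q i) →
      (|Acoeff s p m q r| ≤
        K * (∏ i : Fin s, ((max 1 (m i.castSucc) : ℕ) : ℝ) ^ (q i - r i)) *
          ((max 1 (m (Fin.last s)) : ℕ) : ℝ) ^ (∑ i, q i - ∑ i, r i)) ∧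
      (1 ≤ ∑ j, m j →
        |Acoeff s p m q r| ≤ K * ((∑ j, m j : ℕ) : ℝ) ^ (∑ i, q i)) :=
  Acoeff_upper_bound_general s p q
end

section
/- With the operator A_m as in the context, assume 0 < p_i ≤ 1 for all 1 ≤ i ≤ s and fix multi-indices q, r ∈ ℕ^s with r ≤ q. Then there exists a constant K' > 0, depending only on q, such that for every m = (m₁,…,m_{s+1}) ∈ ℕ^{s+1} with m_{s+1} = 0 and m_i > q_i − r_i for all 1 ≤ i ≤ s, one has A_m[q,r] ≥ K' · ∏_{i=1}^{s} m_i^{q_i − r_i}. -/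
/-!
Once `m_{s+1} = 0`, `A_m` is the product of the operators `(1 + c_i ∂_i)^{m_i}` with
`c_i = p_i⁻¹ ≥ 1`. Each of them sends monomials to polynomials with nonnegative coefficients,
hence is monotone for the coefficientwise order, and its binomial expansion on `X^u` contains
the term `C(m_i, d) c_i^d (u_i)_d X^{u - d e_i}`. Choosing `d = q_i - r_i` in every factor
bounds `A_m[q,r]` below by
`∏ C(m_i, q_i - r_i) c_i^{q_i - r_i} (q_i)_{q_i - r_i} ≥ ∏ C(m_i, q_i - r_i)`,
and `C(m, d) ≥ m^d / ((d + 1)^d d!)` because `m ≤ (d + 1)(m + 1 - d)`.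
-/

open MvPolynomial Finset Finsupp

namespace MvPolynomial

variable {R σ : Type*}

section CommSemiring

variable [CommSemiring R]

theorem pderiv_iterate_monomial (i : σ) (j : ℕ) (u : σ →₀ ℕ) (a : R) :
    (pderiv i)^[j] (monomial u a) = monomial (u - single i j) (a * (u i).descFactorial j) := by
  induction j with
  | zero => simp
  | succ j ih =>
    rw [Function.iterate_succ_apply', ih, pderiv_monomial, tsub_tsub, ← single_add,
      tsub_apply, single_eq_same, Nat.descFactorial_succ]
    push_cast
    ring_nf

theorem one_add_smul_pderiv_pow_monomial (i : σ) (c : R) (m : ℕ) (u : σ →₀ ℕ) :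
    ((1 + c • (pderiv i).toLinearMap : Module.End R (MvPolynomial σ R)) ^ m) (monomial u 1) =
      ∑ j ∈ range (m + 1),
        monomial (u - single i j) (m.choose j * c ^ j * (u i).descFactorial j : R) := by
  rw [add_comm, (Commute.one_right _).add_pow, LinearMap.sum_apply]
  refine sum_congr rfl fun j _ => ?_
  rw [one_pow, mul_one, Module.End.mul_apply, smul_pow, Module.End.natCast_apply,
    LinearMap.smul_apply, Module.End.pow_apply, ← map_nsmul]
  simp only [Derivation.coeFn_coe, pderiv_iterate_monomial, smul_monomial, smul_eq_mul,
    nsmul_eq_mul, mul_one]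
  ring_nf

def CoeffLE [LE R] (P Q : MvPolynomial σ R) : Prop :=
  ∀ v, coeff v P ≤ coeff v Q

theorem coeff_monomial_nonneg [Preorder R] {a : R} (ha : 0 ≤ a) (u v : σ →₀ ℕ) :
    0 ≤ coeff v (monomial u a) := by
  classical
  rw [coeff_monomial]
  split_ifs
  exacts [ha, le_rfl]

theorem CoeffLE.trans [Preorder R] {P Q S : MvPolynomial σ R}
    (hPQ : CoeffLE P Q) (hQS : CoeffLE Q S) : CoeffLE P S :=
  fun v => (hPQ v).trans (hQS v)

end CommSemiring

section OrderedRing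

variable [CommRing R] [PartialOrder R] [IsOrderedRing R]

theorem CoeffLE.smul {P Q : MvPolynomial σ R} (h : CoeffLE P Q) {a : R} (ha : 0 ≤ a) :
    CoeffLE (a • P) (a • Q) :=
  fun v => by simpa only [coeff_smul, smul_eq_mul] using mul_le_mul_of_nonneg_left (h v) ha

theorem CoeffLE.map {T : Module.End R (MvPolynomial σ R)}
    (hT : ∀ u v, 0 ≤ coeff v (T (monomial u 1))) {P Q : MvPolynomial σ R} (h : CoeffLE P Q) :
    CoeffLE (T P) (T Q) := by
  intro v
  have hdiff : T Q - T P = ∑ u ∈ (Q - P).support, coeff u (Q - P) • T (monomial u 1) := by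
    conv_lhs => rw [← map_sub, (Q - P).as_sum]
    simp only [map_sum, ← map_smul, smul_eq_mul, mul_one]
  have : 0 ≤ coeff v (T Q - T P) := by
    rw [hdiff, coeff_sum]
    refine sum_nonneg fun u _ => ?_
    rw [coeff_smul, smul_eq_mul, coeff_sub]
    exact mul_nonneg (sub_nonneg.2 (h u)) (hT u v)
  rwa [coeff_sub, sub_nonneg] at this

theorem coeff_one_add_smul_pderiv_pow_monomial_nonneg {c : R} (hc : 0 ≤ c) (i : σ) (m : ℕ)
    (u v : σ →₀ ℕ) :
    0 ≤ coeff v (((1 + c • (pderiv i).toLinearMap : Module.End R (MvPolynomial σ R)) ^ m)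
      (monomial u 1)) := by
  rw [one_add_smul_pderiv_pow_monomial, coeff_sum]
  exact sum_nonneg fun j _ => coeff_monomial_nonneg (by positivity) _ _

theorem monomial_coeffLE_one_add_smul_pderiv_pow {c : R} (hc : 0 ≤ c) (i : σ) {d m : ℕ}
    (hdm : d ≤ m) (u : σ →₀ ℕ) :
    CoeffLE (monomial (u - single i d) (m.choose d * c ^ d * (u i).descFactorial d : R))
      (((1 + c • (pderiv i).toLinearMap : Module.End R (MvPolynomial σ R)) ^ m)
        (monomial u 1)) := by
  intro v
  rw [one_add_smul_pderiv_pow_monomial, coeff_sum]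
  exact single_le_sum (f := fun j => coeff v (monomial (u - single i j)
      (m.choose j * c ^ j * (u i).descFactorial j : R)))
    (fun j _ => coeff_monomial_nonneg (by positivity) _ _) (mem_range_succ_iff.2 hdm)

theorem monomial_coeffLE_list_prod_one_add_smul_pderiv_pow {c : σ → R} (hc : ∀ i, 0 ≤ c i)
    {m d : σ → ℕ} (hdm : ∀ i, d i ≤ m i) {L : List σ} (hL : L.Nodup) (u : σ →₀ ℕ) :
    CoeffLE
      (monomial (u - (L.map fun i => single i (d i)).sum)
        (L.map fun i => ((m i).choose (d i) * c i ^ d i * (u i).descFactorial (d i) : R)).prod)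
      ((L.map fun i =>
        (1 + c i • (pderiv i).toLinearMap : Module.End R (MvPolynomial σ R)) ^ m i).prod
        (monomial u 1)) := by
  induction L with
  | nil => simp [CoeffLE]
  | cons i L ih =>
    obtain ⟨hiL, hL⟩ := List.nodup_cons.1 hL
    set S := (L.map fun j => single j (d j)).sum
    set a :=
      (L.map fun j => ((m j).choose (d j) * c j ^ d j * (u j).descFactorial (d j) : R)).prod
    have hS : (u - S) i = u i := by
      suffices S i = 0 by rw [tsub_apply, this, tsub_zero]
      rw [← Finsupp.applyAddHom_apply, map_list_sum, List.map_map]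
      refine List.sum_eq_zero fun x hx => ?_
      obtain ⟨j, hj, rfl⟩ := List.mem_map.1 hx
      simp [ne_of_mem_of_not_mem hj hiL]
    have ha : 0 ≤ a := List.prod_nonneg <| by
      simp only [List.mem_map]
      rintro _ ⟨j, -, rfl⟩
      have := hc j
      positivity
    have hstep := (monomial_coeffLE_one_add_smul_pderiv_pow (hc i) i (hdm i) (u - S)).smul ha
    set T : Module.End R (MvPolynomial σ R) := (1 + c i • (pderiv i).toLinearMap) ^ m i
    have hT : a • T (monomial (u - S) 1) = T (monomial (u - S) a) := by
      rw [← map_smul, smul_monomial, smul_eq_mul, mul_one]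
    rw [hS, hT, smul_monomial, smul_eq_mul, mul_comm] at hstep
    simp only [List.map_cons, List.prod_cons, List.sum_cons, Module.End.mul_apply]
    rw [add_comm, ← tsub_tsub]
    exact hstep.trans
      ((ih hL).map (coeff_one_add_smul_pderiv_pow_monomial_nonneg (hc i) i (m i)))

end OrderedRing

end MvPolynomial

namespace Nat

theorem pow_le_mul_choose {d q m : ℕ} (hdq : d ≤ q) (hdm : d ≤ m) :
    m ^ d ≤ (q + 1) ^ q * q ! * m.choose d := by
  have hm : m ≤ (d + 1) * (m + 1 - d) := by
    obtain ⟨k, rfl⟩ := Nat.exists_eq_add_of_le hdm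
    rw [show d + k + 1 - d = k + 1 by omega]
    nlinarith
  calc m ^ d ≤ ((d + 1) * (m + 1 - d)) ^ d := Nat.pow_le_pow_left hm d
    _ = (d + 1) ^ d * (m + 1 - d) ^ d := mul_pow _ _ _
    _ ≤ (d + 1) ^ d * m.descFactorial d := Nat.mul_le_mul_left _ (pow_sub_le_descFactorial m d)
    _ = (d + 1) ^ d * d ! * m.choose d := by rw [descFactorial_eq_factorial_mul_choose, mul_assoc]
    _ ≤ (q + 1) ^ q * q ! * m.choose d := by
      have hpow : (d + 1) ^ d ≤ (q + 1) ^ q :=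
        (Nat.pow_le_pow_left (by omega) d).trans (Nat.pow_le_pow_right (by omega) hdq)
      gcongr

end Nat

theorem prod_le_Acoeff {s : ℕ} {p : Fin (s + 1) → ℝ} (hp : ∀ i : Fin s, 0 ≤ p i.castSucc)
    {m : Fin (s + 1) → ℕ} (hm : m (Fin.last s) = 0) {q r : Fin s → ℕ}
    (hrq : ∀ i, r i ≤ q i) (hqrm : ∀ i, q i - r i ≤ m i.castSucc) :
    ∏ i, ((m i.castSucc).choose (q i - r i) * (p i.castSucc)⁻¹ ^ (q i - r i) *
      (q i).descFactorial (q i - r i) : ℝ) ≤ Acoeff s p m q r := by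
  have key := MvPolynomial.monomial_coeffLE_list_prod_one_add_smul_pderiv_pow
    (c := fun i => (p i.castSucc)⁻¹) (fun i => inv_nonneg.2 (hp i)) (m := fun i => m i.castSucc)
    (d := fun i => q i - r i) hqrm (List.nodup_finRange s) (equivFunOnFinite.symm q)
    (equivFunOnFinite.symm r)
  have hexp : equivFunOnFinite.symm q - ∑ i, single i (q i - r i) = equivFunOnFinite.symm r := by
    ext j
    simp only [tsub_apply, finsetSum_apply, single_apply, Finset.sum_ite_eq', Finset.mem_univ,
      if_true, coe_equivFunOnFinite_symm]
    have := hrq j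
    omega
  rw [← Fin.sum_univ_def, ← Fin.prod_univ_def, ← List.ofFn_eq_map, hexp] at key
  simpa [Acoeff, Aop, hm, pd, coeff_monomial] using key

theorem Acoeff_lower_bound_general
    (s : ℕ) (q : Fin s → ℕ) :
    ∃ K' : ℝ, 0 < K' ∧ ∀ r : Fin s → ℕ, (∀ i, r i ≤ q i) →
      ∀ p : Fin (s + 1) → ℝ, (∀ i : Fin s, 0 < p i.castSucc ∧ p i.castSucc ≤ 1) →
      ∀ m : Fin (s + 1) → ℕ, m (Fin.last s) = 0 →
        (∀ i : Fin s, q i - r i < m i.castSucc) →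
        K' * ∏ i : Fin s, ((m i.castSucc : ℕ) : ℝ) ^ (q i - r i) ≤ Acoeff s p m q r := by
  set K : Fin s → ℝ := fun i => ((q i + 1) ^ q i * (q i).factorial : ℕ)
  refine ⟨∏ i, (K i)⁻¹, prod_pos fun i _ => by positivity, ?_⟩
  intro r hrq p hp m hm hqrm
  refine le_trans ?_ (prod_le_Acoeff (fun i => (hp i).1.le) hm hrq fun i => (hqrm i).le)
  rw [← prod_mul_distrib]
  refine prod_le_prod (fun i _ => by positivity) fun i _ => ?_
  have hchoose :
      (K i)⁻¹ * (m i.castSucc : ℝ) ^ (q i - r i) ≤ (m i.castSucc).choose (q i - r i) := by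
    rw [inv_mul_le_iff₀ (by positivity)]
    dsimp only [K]
    exact_mod_cast Nat.pow_le_mul_choose (Nat.sub_le _ _) (hqrm i).le
  have hp_inv : 1 ≤ (p i.castSucc)⁻¹ ^ (q i - r i) :=
    one_le_pow₀ ((one_le_inv₀ (hp i).1).2 (hp i).2)
  have hdesc : (1 : ℝ) ≤ (q i).descFactorial (q i - r i) := by
    exact_mod_cast Nat.descFactorial_pos.2 (Nat.sub_le _ _)
  calc (K i)⁻¹ * (m i.castSucc : ℝ) ^ (q i - r i)
      ≤ (m i.castSucc).choose (q i - r i) * 1 * 1 := by simpa using hchoose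
    _ ≤ _ := by gcongr

/-- The lower bound of Lemma `matrix-growth`: for `q` there is a constant `K' > 0`,
depending only on `q`, such that whenever `r ≤ q`, `0 < p_i ≤ 1` for `1 ≤ i ≤ s`,
the letter `s+1` does not occur (`m_{s+1} = 0`) and `m_i > q_i − r_i` for all `i`,
one has `A_m[q,r] ≥ K' ∏_i m_i^(q_i−r_i)`. -/
theorem Acoeff_lower_bound
    (s : ℕ) (hs : 1 ≤ s) (q : Fin s → ℕ) :
    ∃ K' : ℝ, 0 < K' ∧ ∀ r : Fin s → ℕ, (∀ i, r i ≤ q i) →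
      ∀ p : Fin (s + 1) → ℝ, (∀ i : Fin s, 0 < p i.castSucc ∧ p i.castSucc ≤ 1) →
      ∀ m : Fin (s + 1) → ℕ, m (Fin.last s) = 0 →
        (∀ i : Fin s, q i - r i < m i.castSucc) →
        K' * ∏ i : Fin s, ((m i.castSucc : ℕ) : ℝ) ^ (q i - r i) ≤ Acoeff s p m q r :=
  Acoeff_lower_bound_general s q
end

section
/- Let V be a finite set and A : V × V → {0,1} an incidence matrix; let Σ_A := {ω ∈ V^ℕ : A(ω_n, ω_{n+1}) = 1 for all n ≥ 0}, endowed with the metric d(ω,τ) := 2^{−inf{n ≥ 0 : ω_n ≠ τ_n}}, and let σ : Σ_A → Σ_A be the left shift, with Birkhoff sums S_n g := ∑_{j=0}^{n−1} g ∘ σ^j. Assume A is irreducible, i.e. for all u, v ∈ V there exist n ≥ 1 and x₀ = u, x₁, …, x_n = v in V with A(x_i, x_{i+1}) = 1 for all i < n. Let φ, ψ : Σ_A → ℝ be Hölder continuous, and assume there exist m ∈ ℕ with m ≥ 1 and θ < 0, θ' < 0 such that S_m φ(ω) ≤ θ and S_m ψ(ω) ≤ θ' for all ω ∈ Σ_A.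 Let α ≥ 0 and assume that for every periodic point ω ∈ Σ_A (i.e. σ^n ω = ω for some n ≥ 1) one has S_n ψ(ω) / S_n φ(ω) ≥ α. Then there exists a constant K ≥ 1 such that for all x ∈ Σ_A and all k ∈ ℕ, exp(S_{km} ψ(x)) ≤ K · exp(α · S_{km} φ(x)). -/
open Classical

/-- The metric `d(ω,τ) = 2^{-inf{n : ω_n ≠ τ_n}}` on the sequence space `V^ℕ`
(and `d(ω,τ) = 0` if `ω = τ`). -/
noncomputable def seqDist {V : Type*} (ω τ : ℕ → V) : ℝ :=
  if ω = τ then 0 else (2 : ℝ) ^ (-((sInf {n : ℕ | ω n ≠ τ n} : ℕ) : ℤ))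

/-- The left shift on the sequence space `V^ℕ`. -/
def shiftMap {V : Type*} (ω : ℕ → V) : ℕ → V := fun n => ω (n + 1)

/-- The `n`-th Birkhoff sum `S_n g = ∑_{j=0}^{n-1} g ∘ σ^j` with respect to the shift. -/
noncomputable def birkSum {V : Type*} (g : (ℕ → V) → ℝ) (n : ℕ) (ω : ℕ → V) : ℝ :=
  ∑ j ∈ Finset.range n, g (shiftMap^[j] ω)

/-- The subshift of finite type `Σ_A` determined by the incidence relation `A`. -/
def shiftSpace {V : Type*} (A : V → V → Prop) : Set (ℕ → V) :=
  {ω | ∀ n : ℕ, A (ω n) (ω (n + 1))}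

/-!
Closing up the first `n` symbols of `x` along a connecting path, whose length is bounded
uniformly by irreducibility and finiteness of the alphabet, gives a periodic point `ω` of period
`n + t` with `t ≤ N`. Bounded distortion of Hölder potentials makes `S_n g(x)` and
`S_{n+t} g(ω)` differ by `O(t + 1)`. On `ω` the hypothesis gives `S ψ ≤ α S φ`, since
`m S_{n+t} φ(ω) = S_{m(n+t)} φ(ω) ≤ (n + t) θ < 0`. Hence `S_n ψ(x) ≤ α S_n φ(x) + L`
for all `n`, and exponentiating gives the claim with `K = exp L`.
-/

open Finset

namespace Shift

variable {V : Type*} {A : V → V → Prop}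

lemma shiftMap_iterate_apply (j : ℕ) (ω : ℕ → V) (i : ℕ) : shiftMap^[j] ω i = ω (i + j) := by
  induction j generalizing ω with
  | zero => rfl
  | succ j ih =>
    rw [Function.iterate_succ_apply, ih]
    exact congrArg ω (by omega)

lemma shiftMap_iterate_mem {ω : ℕ → V} (hω : ω ∈ shiftSpace A) (j : ℕ) :
    shiftMap^[j] ω ∈ shiftSpace A := by
  intro n
  simpa only [shiftMap_iterate_apply, Nat.add_right_comm n 1 j] using hω (n + j)

lemma birkSum_zero (g : (ℕ → V) → ℝ) (ω : ℕ → V) : birkSum g 0 ω = 0 := rfl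

lemma birkSum_add (g : (ℕ → V) → ℝ) (a b : ℕ) (ω : ℕ → V) :
    birkSum g (a + b) ω = birkSum g a ω + birkSum g b (shiftMap^[a] ω) := by
  simp only [birkSum, sum_range_add, ← Function.iterate_add_apply, Nat.add_comm]

lemma birkSum_mul (g : (ℕ → V) → ℝ) (a b : ℕ) (ω : ℕ → V) :
    birkSum g (a * b) ω = ∑ i ∈ range a, birkSum g b (shiftMap^[i * b] ω) := by
  induction a with
  | zero => simp [birkSum]
  | succ a ih => rw [Nat.succ_mul, birkSum_add, ih, sum_range_succ]

lemma birkSum_mul_of_iterate_eq {g : (ℕ → V) → ℝ} {ω : ℕ → V} {q : ℕ}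
    (hω : shiftMap^[q] ω = ω) (m : ℕ) : birkSum g (m * q) ω = m * birkSum g q ω := by
  have hfix (i : ℕ) : shiftMap^[i * q] ω = ω := by
    rw [mul_comm, Function.iterate_mul]
    exact Function.iterate_fixed hω i
  simp only [birkSum_mul, hfix, sum_const, card_range, nsmul_eq_mul]

lemma birkSum_mul_le {g : (ℕ → V) → ℝ} {m : ℕ} {θ : ℝ}
    (hg : ∀ ω ∈ shiftSpace A, birkSum g m ω ≤ θ) {ω : ℕ → V} (hω : ω ∈ shiftSpace A) (q : ℕ) :
    birkSum g (q * m) ω ≤ q * θ := by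
  rw [birkSum_mul]
  calc ∑ i ∈ range q, birkSum g m (shiftMap^[i * m] ω) ≤ ∑ _i ∈ range q, θ :=
        sum_le_sum fun i _ => hg _ (shiftMap_iterate_mem hω _)
    _ = q * θ := by rw [sum_const, card_range, nsmul_eq_mul]

lemma birkSum_neg_of_iterate_eq {g : (ℕ → V) → ℝ} {m : ℕ} {θ : ℝ}
    (hg : ∀ ω ∈ shiftSpace A, birkSum g m ω ≤ θ) (hθ : θ < 0)
    {ω : ℕ → V} (hω : ω ∈ shiftSpace A) {q : ℕ} (hq : 0 < q) (hper : shiftMap^[q] ω = ω) :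
    birkSum g q ω < 0 := by
  have hqθ : (q : ℝ) * θ < 0 := mul_neg_of_pos_of_neg (by exact_mod_cast hq) hθ
  have hmq : (m : ℝ) * birkSum g q ω < 0 := by
    rw [← birkSum_mul_of_iterate_eq hper, mul_comm]
    exact (birkSum_mul_le hg hω q).trans_lt hqθ
  exact neg_of_mul_neg_right hmq m.cast_nonneg

lemma abs_birkSum_le {g : (ℕ → V) → ℝ} {M : ℝ} (hM : ∀ τ ∈ shiftSpace A, |g τ| ≤ M)
    (t : ℕ) {τ : ℕ → V} (hτ : τ ∈ shiftSpace A) : |birkSum g t τ| ≤ t * M := by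
  calc |birkSum g t τ| ≤ ∑ j ∈ range t, |g (shiftMap^[j] τ)| := abs_sum_le_sum_abs _ _
    _ ≤ ∑ _j ∈ range t, M := sum_le_sum fun j _ => hM _ (shiftMap_iterate_mem hτ j)
    _ = t * M := by rw [sum_const, card_range, nsmul_eq_mul]

lemma seqDist_nonneg (ω τ : ℕ → V) : 0 ≤ seqDist ω τ := by
  unfold seqDist
  split_ifs <;> positivity

lemma seqDist_le_of_eqOn {ω τ : ℕ → V} {t : ℕ} (h : ∀ i < t, ω i = τ i) :
    seqDist ω τ ≤ 2⁻¹ ^ t := by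
  unfold seqDist
  split_ifs with hωτ
  · positivity
  have hne : {n : ℕ | ω n ≠ τ n}.Nonempty := Function.ne_iff.mp hωτ
  have ht : t ≤ sInf {n : ℕ | ω n ≠ τ n} := by
    by_contra! hlt
    exact Nat.sInf_mem hne (h _ hlt)
  rw [zpow_neg, zpow_natCast, ← inv_pow]
  exact pow_le_pow_of_le_one (by norm_num) (by norm_num) ht

lemma seqDist_le_one (ω τ : ℕ → V) : seqDist ω τ ≤ 1 := by
  simpa using seqDist_le_of_eqOn (ω := ω) (τ := τ) (t := 0) (by simp)

def HolderOnShiftSpace (A : V → V → Prop) (c γ : ℝ) (g : (ℕ → V) → ℝ) : Prop :=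
  ∀ ω ∈ shiftSpace A, ∀ τ ∈ shiftSpace A, |g ω - g τ| ≤ c * seqDist ω τ ^ γ

namespace HolderOnShiftSpace

variable {g : (ℕ → V) → ℝ} {c γ : ℝ}

lemma exists_abs_le (hg : HolderOnShiftSpace A c γ g) (hc : 0 ≤ c) (hγ : 0 ≤ γ) :
    ∃ M, 0 ≤ M ∧ ∀ τ ∈ shiftSpace A, |g τ| ≤ M := by
  rcases (shiftSpace A).eq_empty_or_nonempty with hA | ⟨z, hz⟩
  · exact ⟨0, le_rfl, by simp [hA]⟩
  refine ⟨|g z| + c, by positivity, fun τ hτ => ?_⟩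
  have hd : seqDist τ z ^ γ ≤ 1 := Real.rpow_le_one (seqDist_nonneg _ _) (seqDist_le_one _ _) hγ
  have hgτ : |g τ - g z| ≤ c := (hg τ hτ z hz).trans (mul_le_of_le_one_right hc hd)
  linarith [abs_sub_abs_le_abs_sub (g τ) (g z)]

/-- The `j`-th summands differ by at most `c 2^{-γ(n-j)}`: the terms of a geometric series. -/
lemma abs_birkSum_sub_le (hg : HolderOnShiftSpace A c γ g) (hc : 0 ≤ c) (hγ : 0 < γ)
    {x ω : ℕ → V} (hx : x ∈ shiftSpace A) (hω : ω ∈ shiftSpace A) {n : ℕ}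
    (hxω : ∀ i < n, x i = ω i) :
    |birkSum g n x - birkSum g n ω| ≤ c * (1 - 2⁻¹ ^ γ)⁻¹ := by
  set r : ℝ := 2⁻¹ ^ γ
  have hr0 : 0 ≤ r := by positivity
  have hr1 : r < 1 := Real.rpow_lt_one (by norm_num) (by norm_num) hγ
  have hterm : ∀ j < n, |g (shiftMap^[j] x) - g (shiftMap^[j] ω)| ≤ c * r ^ (n - 1 - j) := by
    intro j hj
    have hd : seqDist (shiftMap^[j] x) (shiftMap^[j] ω) ≤ 2⁻¹ ^ (n - j) :=
      seqDist_le_of_eqOn fun i hi => by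
        simpa only [shiftMap_iterate_apply] using hxω (i + j) (by omega)
    have hdγ : seqDist (shiftMap^[j] x) (shiftMap^[j] ω) ^ γ ≤ r ^ (n - 1 - j) :=
      calc seqDist (shiftMap^[j] x) (shiftMap^[j] ω) ^ γ ≤ ((2⁻¹ : ℝ) ^ (n - j)) ^ γ :=
            Real.rpow_le_rpow (seqDist_nonneg _ _) hd hγ.le
        _ = r ^ (n - j) := (Real.rpow_pow_comm (by norm_num) _ _).symm
        _ ≤ r ^ (n - 1 - j) := pow_le_pow_of_le_one hr0 hr1.le (by omega)
    exact (hg _ (shiftMap_iterate_mem hx j) _ (shiftMap_iterate_mem hω j)).trans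
      (mul_le_mul_of_nonneg_left hdγ hc)
  calc |birkSum g n x - birkSum g n ω|
      ≤ ∑ j ∈ range n, |g (shiftMap^[j] x) - g (shiftMap^[j] ω)| := by
        rw [birkSum, birkSum, ← sum_sub_distrib]
        exact abs_sum_le_sum_abs _ _
    _ ≤ ∑ j ∈ range n, c * r ^ (n - 1 - j) :=
        sum_le_sum fun j hj => hterm j (mem_range.mp hj)
    _ = c * ∑ j ∈ range n, r ^ j := by
        rw [← mul_sum, sum_range_reflect (fun j => r ^ j) n]
    _ ≤ c * (1 - r)⁻¹ := by
        refine mul_le_mul_of_nonneg_left ?_ hc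
        simpa [← range_eq_Ico] using geom_sum_Ico_le_of_lt_one (m := 0) (n := n) hr0 hr1

lemma exists_abs_birkSum_add_sub_le (hg : HolderOnShiftSpace A c γ g) (hc : 0 ≤ c)
    (hγ : 0 < γ) :
    ∃ C : ℝ, 0 ≤ C ∧ ∀ x ∈ shiftSpace A, ∀ ω ∈ shiftSpace A, ∀ n t : ℕ, (∀ i < n, x i = ω i) →
      |birkSum g (n + t) ω - birkSum g n x| ≤ C * (t + 1) := by
  obtain ⟨M, hM0, hM⟩ := hg.exists_abs_le hc hγ.le
  have hr1 : (2⁻¹ : ℝ) ^ γ < 1 := Real.rpow_lt_one (by norm_num) (by norm_num) hγ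
  have hD0 : 0 ≤ c * (1 - 2⁻¹ ^ γ)⁻¹ := mul_nonneg hc (inv_nonneg.mpr (by linarith))
  refine ⟨c * (1 - 2⁻¹ ^ γ)⁻¹ + M, add_nonneg hD0 hM0, fun x hx ω hω n t hxω => ?_⟩
  have hdist := hg.abs_birkSum_sub_le hc hγ hx hω hxω
  rw [abs_sub_comm] at hdist
  have htail := abs_birkSum_le hM t (shiftMap_iterate_mem hω n)
  rw [birkSum_add]
  calc |birkSum g n ω + birkSum g t (shiftMap^[n] ω) - birkSum g n x|
      ≤ |birkSum g n ω - birkSum g n x| + |birkSum g t (shiftMap^[n] ω)| := by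
        rw [add_sub_right_comm]
        exact abs_add_le _ _
    _ ≤ c * (1 - 2⁻¹ ^ γ)⁻¹ + t * M := add_le_add hdist htail
    _ ≤ (c * (1 - 2⁻¹ ^ γ)⁻¹ + M) * (t + 1) := by nlinarith [t.cast_nonneg (α := ℝ)]

end HolderOnShiftSpace

lemma exists_path_length_le [Finite V]
    (hirr : ∀ u v : V, ∃ n : ℕ, 1 ≤ n ∧ ∃ x : ℕ → V, x 0 = u ∧ x n = v ∧
      ∀ i < n, A (x i) (x (i + 1))) :
    ∃ N : ℕ, ∀ u v : V, ∃ t ≤ N, ∃ y : ℕ → V, y 0 = u ∧ y (t + 1) = v ∧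
      ∀ i ≤ t, A (y i) (y (i + 1)) := by
  choose P hP1 y hy0 hyP hyA using hirr
  obtain ⟨N, hN⟩ := (Set.finite_range fun w : V × V => P w.1 w.2).bddAbove
  refine ⟨N, fun u v => ⟨P u v - 1, ?_, y u v, hy0 u v, ?_, fun i hi => hyA u v i ?_⟩⟩
  · have : P u v ≤ N := hN ⟨(u, v), rfl⟩
    omega
  · rw [Nat.sub_add_cancel (hP1 u v)]
    exact hyP u v
  · have := hP1 u v
    omega

lemma mem_shiftSpace_of_cycle {c : ℕ → V} {q : ℕ} (hq : 0 < q)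
    (hc : ∀ i < q, A (c i) (c (i + 1))) (hcq : c q = c 0) :
    (fun j => c (j % q)) ∈ shiftSpace A := by
  intro j
  have hj := hc (j % q) (Nat.mod_lt j hq)
  show A (c (j % q)) (c ((j + 1) % q))
  rw [← Nat.mod_add_mod]
  rcases (show j % q + 1 ≤ q from Nat.mod_lt j hq).lt_or_eq with hlt | heq
  · rwa [Nat.mod_eq_of_lt hlt]
  · rw [heq, Nat.mod_self, ← hcq]
    rwa [heq] at hj

lemma iterate_shiftMap_cycle (c : ℕ → V) (q : ℕ) :
    shiftMap^[q] (fun j => c (j % q)) = fun j => c (j % q) := by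
  funext j
  rw [shiftMap_iterate_apply, Nat.add_mod_right]

/-- Closing up: follow `x` for `n` steps, then return along `y` to `x 0`, and repeat. -/
lemma exists_iterate_eq_of_path {x y : ℕ → V} (hx : x ∈ shiftSpace A) {n t : ℕ} (hn : 0 < n)
    (hy0 : y 0 = x (n - 1)) (hyt : y (t + 1) = x 0) (hy : ∀ i ≤ t, A (y i) (y (i + 1))) :
    ∃ ω ∈ shiftSpace A, shiftMap^[n + t] ω = ω ∧ ∀ i < n, x i = ω i := by
  set c : ℕ → V := fun j => if j < n then x j else y (j + 1 - n)
  have hc : ∀ i < n + t, A (c i) (c (i + 1)) := by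
    intro i hi
    by_cases h1 : i + 1 < n
    · simpa [c, h1, show i < n by omega] using hx i
    have hci1 : c (i + 1) = y (i + 1 - n + 1) := by
      simp only [c, if_neg h1]
      congr 1
      omega
    have hci : c i = y (i + 1 - n) := by
      by_cases h0 : i < n
      · simp only [c, if_pos h0, show i + 1 - n = 0 by omega, hy0]
        congr 1
        omega
      · simp only [c, if_neg h0]
    rw [hci, hci1]
    exact hy _ (by omega)
  have hcq : c (n + t) = c 0 := by
    simp only [c, if_pos hn, if_neg (show ¬ n + t < n by omega),
      show n + t + 1 - n = t + 1 by omega, hyt]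
  refine ⟨_, mem_shiftSpace_of_cycle (by omega) hc hcq, iterate_shiftMap_cycle c _,
    fun i hi => ?_⟩
  simp [c, Nat.mod_eq_of_lt (show i < n + t by omega), hi]

theorem exists_birkSum_le_mul_birkSum_add [Finite V]
    (hirr : ∀ u v : V, ∃ n : ℕ, 1 ≤ n ∧ ∃ x : ℕ → V, x 0 = u ∧ x n = v ∧
      ∀ i < n, A (x i) (x (i + 1)))
    {φ ψ : (ℕ → V) → ℝ} {cφ γφ cψ γψ : ℝ}
    (hφ : HolderOnShiftSpace A cφ γφ φ) (hcφ : 0 ≤ cφ) (hγφ : 0 < γφ)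
    (hψ : HolderOnShiftSpace A cψ γψ ψ) (hcψ : 0 ≤ cψ) (hγψ : 0 < γψ)
    {m : ℕ} {θ : ℝ} (hθ : θ < 0) (hSφ : ∀ ω ∈ shiftSpace A, birkSum φ m ω ≤ θ) {α : ℝ}
    (hper : ∀ ω ∈ shiftSpace A, ∀ n : ℕ, 1 ≤ n → shiftMap^[n] ω = ω →
      α ≤ birkSum ψ n ω / birkSum φ n ω) :
    ∃ L : ℝ, 0 ≤ L ∧ ∀ x ∈ shiftSpace A, ∀ n : ℕ,
      birkSum ψ n x ≤ α * birkSum φ n x + L := by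
  obtain ⟨N, hpath⟩ := exists_path_length_le hirr
  obtain ⟨Cφ, hCφ0, hCφ⟩ := hφ.exists_abs_birkSum_add_sub_le hcφ hγφ
  obtain ⟨Cψ, hCψ0, hCψ⟩ := hψ.exists_abs_birkSum_add_sub_le hcψ hγψ
  refine ⟨(Cψ + |α| * Cφ) * (N + 1), by positivity, fun x hx n => ?_⟩
  rcases Nat.eq_zero_or_pos n with rfl | hn
  · simp only [birkSum_zero, mul_zero, zero_add]
    positivity
  obtain ⟨t, htN, y, hy0, hyt, hy⟩ := hpath (x (n - 1)) (x 0)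
  obtain ⟨ω, hω, hωper, hxω⟩ := exists_iterate_eq_of_path hx hn hy0 hyt hy
  have hneg : birkSum φ (n + t) ω < 0 := birkSum_neg_of_iterate_eq hSφ hθ hω (by omega) hωper
  have hcmp : birkSum ψ (n + t) ω ≤ α * birkSum φ (n + t) ω :=
    (le_div_iff_of_neg hneg).mp (hper ω hω _ (by omega) hωper)
  have hψ_dist := abs_le.mp (hCψ x hx ω hω n t hxω)
  have hφ_dist : α * (birkSum φ (n + t) ω - birkSum φ n x) ≤ |α| * (Cφ * (t + 1)) :=
    calc α * (birkSum φ (n + t) ω - birkSum φ n x)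
        ≤ |α| * |birkSum φ (n + t) ω - birkSum φ n x| := (le_abs_self _).trans (abs_mul _ _).le
      _ ≤ |α| * (Cφ * (t + 1)) := mul_le_mul_of_nonneg_left (hCφ x hx ω hω n t hxω) (abs_nonneg α)
  have htN' : (t : ℝ) + 1 ≤ N + 1 := by exact_mod_cast Nat.succ_le_succ htN
  have hCN : (Cψ + |α| * Cφ) * (t + 1) ≤ (Cψ + |α| * Cφ) * (N + 1) :=
    mul_le_mul_of_nonneg_left htN' (by positivity)
  linarith

end Shift

theorem birkhoff_quotient_estimate_general
    {V : Type*} [Fintype V] (A : V → V → Prop)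
    (hirr : ∀ u v : V, ∃ n : ℕ, 1 ≤ n ∧ ∃ x : ℕ → V, x 0 = u ∧ x n = v ∧
      ∀ i < n, A (x i) (x (i + 1)))
    (φ ψ : (ℕ → V) → ℝ)
    (cφ γφ : ℝ) (hcφ : 0 ≤ cφ) (hγφ : 0 < γφ)
    (hφ : ∀ ω ∈ shiftSpace A, ∀ τ ∈ shiftSpace A, |φ ω - φ τ| ≤ cφ * seqDist ω τ ^ γφ)
    (cψ γψ : ℝ) (hcψ : 0 ≤ cψ) (hγψ : 0 < γψ)
    (hψ : ∀ ω ∈ shiftSpace A, ∀ τ ∈ shiftSpace A, |ψ ω - ψ τ| ≤ cψ * seqDist ω τ ^ γψ)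
    (m : ℕ) (θ : ℝ) (hθ : θ < 0)
    (hSφ : ∀ ω ∈ shiftSpace A, birkSum φ m ω ≤ θ)
    (α : ℝ)
    (hper : ∀ ω ∈ shiftSpace A, ∀ n : ℕ, 1 ≤ n → shiftMap^[n] ω = ω →
      α ≤ birkSum ψ n ω / birkSum φ n ω) :
    ∃ K : ℝ, 1 ≤ K ∧ ∀ x ∈ shiftSpace A, ∀ k : ℕ,
      Real.exp (birkSum ψ (k * m) x) ≤ K * Real.exp (α * birkSum φ (k * m) x) := by
  obtain ⟨L, hL0, hL⟩ :=
    Shift.exists_birkSum_le_mul_birkSum_add hirr hφ hcφ hγφ hψ hcψ hγψ hθ hSφ hper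
  refine ⟨Real.exp L, Real.one_le_exp hL0, fun x hx k => ?_⟩
  calc Real.exp (birkSum ψ (k * m) x) ≤ Real.exp (α * birkSum φ (k * m) x + L) :=
        Real.exp_le_exp.mpr (hL x hx _)
    _ = Real.exp L * Real.exp (α * birkSum φ (k * m) x) := by rw [Real.exp_add, mul_comm]

/-- The uniform Birkhoff-quotient estimate (`equ:birkhoffquotients`) from the proof of
Theorem `c0holder`: if `A` is irreducible, `φ, ψ` are Hölder continuous on `Σ_A` with
eventually negative Birkhoff sums, and every periodic point satisfies
`S_n ψ / S_n φ ≥ α`, then `exp(S_{km} ψ(x)) ≤ K exp(α S_{km} φ(x))` uniformly. -/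
theorem birkhoff_quotient_estimate
    {V : Type*} [Fintype V] (A : V → V → Prop)
    (hirr : ∀ u v : V, ∃ n : ℕ, 1 ≤ n ∧ ∃ x : ℕ → V, x 0 = u ∧ x n = v ∧
      ∀ i < n, A (x i) (x (i + 1)))
    (φ ψ : (ℕ → V) → ℝ)
    (cφ γφ : ℝ) (hcφ : 0 ≤ cφ) (hγφ : 0 < γφ)
    (hφ : ∀ ω ∈ shiftSpace A, ∀ τ ∈ shiftSpace A, |φ ω - φ τ| ≤ cφ * seqDist ω τ ^ γφ)
    (cψ γψ : ℝ) (hcψ : 0 ≤ cψ) (hγψ : 0 < γψ)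
    (hψ : ∀ ω ∈ shiftSpace A, ∀ τ ∈ shiftSpace A, |ψ ω - ψ τ| ≤ cψ * seqDist ω τ ^ γψ)
    (m : ℕ) (hm : 1 ≤ m) (θ θ' : ℝ) (hθ : θ < 0) (hθ' : θ' < 0)
    (hSφ : ∀ ω ∈ shiftSpace A, birkSum φ m ω ≤ θ)
    (hSψ : ∀ ω ∈ shiftSpace A, birkSum ψ m ω ≤ θ')
    (α : ℝ) (hα : 0 ≤ α)
    (hper : ∀ ω ∈ shiftSpace A, ∀ n : ℕ, 1 ≤ n → shiftMap^[n] ω = ω →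
      α ≤ birkSum ψ n ω / birkSum φ n ω) :
    ∃ K : ℝ, 1 ≤ K ∧ ∀ x ∈ shiftSpace A, ∀ k : ℕ,
      Real.exp (birkSum ψ (k * m) x) ≤ K * Real.exp (α * birkSum φ (k * m) x) :=
  birkhoff_quotient_estimate_general A hirr φ ψ cφ γφ hcφ hγφ hφ cψ γψ hcψ hγψ hψ m θ hθ hSφ α hper
end
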